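/- arXiv:0801.3413 — 5 statements merged into one kernel-verified Lean document; each statement's English description precedes it below -/
import Mathlib

section
/- Let f : [s₀, ∞) → ℝ be a nonnegative, continuous, nonincreasing function satisfying f(s + f(s)) ≤ ε·f(s) for all s ≥ s₀, where 0 < ε < 1. Then f(s) = 0 for all s ≥ s₀ + f(s₀)/(1 - ε). -/
/-- Stampacchia-type lemma (Lemma A.1): a nonnegative continuous nonincreasing
function on `[s₀, ∞)` satisfying `f (s + f s) ≤ ε * f s` vanishes beyond
`s₀ + f s₀ / (1 - ε)`. -/
theorem stampacchia_lemma (s₀ ε : ℝ) (f : ℝ → ℝ)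
    (hε0 : 0 < ε) (hε1 : ε < 1)
    (hnonneg : ∀ s, s₀ ≤ s → 0 ≤ f s)
    (hcont : ContinuousOn f (Set.Ici s₀))
    (hmono : AntitoneOn f (Set.Ici s₀))
    (hfun : ∀ s, s₀ ≤ s → f (s + f s) ≤ ε * f s) :
    ∀ s, s₀ + f s₀ / (1 - ε) ≤ s → f s = 0 := by
  intro s hs
  have h1ε : 0 < 1 - ε := by linarith
  have hf0 : 0 ≤ f s₀ := hnonneg s₀ le_rfl
  have hss₀ : s₀ ≤ s := by
    have : 0 ≤ f s₀ / (1 - ε) := by positivity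
    linarith
  set g : ℕ → ℝ := fun n => Nat.rec s₀ (fun _ t => t + f t) n with hg
  have hgsucc : ∀ n, g (n+1) = g n + f (g n) := fun n => rfl
  have key : ∀ n, s₀ ≤ g n ∧ f (g n) ≤ ε ^ n * f s₀ ∧
      g n ≤ s₀ + f s₀ * (1 - ε ^ n) / (1 - ε) := by
    intro n
    induction n with
    | zero => exact ⟨le_rfl, by simp [show g 0 = s₀ from rfl], by simp [show g 0 = s₀ from rfl]⟩
    | succ n ih =>
      obtain ⟨h1, h2, h3⟩ := ih
      have hεn : (0:ℝ) ≤ ε ^ n := by positivity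
      have hnn : 0 ≤ f (g n) := hnonneg _ h1
      have hge : s₀ ≤ g (n+1) := by rw [hgsucc]; linarith
      refine ⟨hge, ?_, ?_⟩
      · calc f (g (n+1)) = f (g n + f (g n)) := by rw [hgsucc]
          _ ≤ ε * f (g n) := hfun _ h1
          _ ≤ ε * (ε ^ n * f s₀) := by nlinarith
          _ = ε ^ (n+1) * f s₀ := by ring
      · rw [hgsucc, pow_succ]
        have heq : f s₀ * (1 - ε ^ n) / (1 - ε) + ε ^ n * f s₀
            = f s₀ * (1 - ε ^ n * ε) / (1 - ε) := by
          field_simp; ring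
        linarith
  have hfs : ∀ n, f s ≤ ε ^ n * f s₀ := by
    intro n
    obtain ⟨h1, h2, h3⟩ := key n
    have hεn1 : ε ^ n ≤ 1 := pow_le_one₀ hε0.le hε1.le
    have hεn0 : (0:ℝ) ≤ ε ^ n := by positivity
    have hb : f s₀ * (1 - ε ^ n) / (1 - ε) ≤ f s₀ / (1 - ε) := by
      gcongr
      nlinarith
    have hgs : g n ≤ s := by linarith
    exact (hmono (Set.mem_Ici.mpr h1) (Set.mem_Ici.mpr hss₀) hgs).trans h2
  have htend : Filter.Tendsto (fun n => ε ^ n * f s₀) Filter.atTop (nhds 0) := by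
    have := (tendsto_pow_atTop_nhds_zero_of_lt_one hε0.le hε1).mul_const (f s₀)
    simpa using this
  have hle : f s ≤ 0 := le_of_tendsto_of_tendsto' tendsto_const_nhds htend hfs
  exact le_antisymm hle (hnonneg s hss₀)
end

section
/- Under the hypotheses of the Stampacchia-type lemma (f nonnegative, continuous, nonincreasing on [s₀, ∞), f(s+f(s)) ≤ ε f(s) with 0 < ε < 1, and s_{k+1} = s_k + f(s_k)), the sequence (s_k) converges and its limit satisfies lim s_k ≤ s₀ + f(s₀)/(1 - ε). -/
/-- The Stampacchia iteration sequence `s_{k+1} = s_k + f (s_k)` converges and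
its limit is at most `s₀ + f s₀ / (1 - ε)`. -/
theorem stampacchia_iteration_converges (s₀ ε : ℝ) (f : ℝ → ℝ) (s : ℕ → ℝ)
    (hε0 : 0 < ε) (hε1 : ε < 1)
    (hnonneg : ∀ x, s₀ ≤ x → 0 ≤ f x)
    (hcont : ContinuousOn f (Set.Ici s₀))
    (hmono : AntitoneOn f (Set.Ici s₀))
    (hfun : ∀ x, s₀ ≤ x → f (x + f x) ≤ ε * f x)
    (hs0 : s 0 = s₀)
    (hrec : ∀ k, s (k + 1) = s k + f (s k)) :
    ∃ L : ℝ, Filter.Tendsto s Filter.atTop (nhds L) ∧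
      L ≤ s₀ + f s₀ / (1 - ε) := by
  have hε1' : (0:ℝ) < 1 - ε := by linarith
  -- key induction: s₀ ≤ s k and f (s k) ≤ ε^k * f s₀ and s k ≤ s₀ + f s₀ * ∑_{i<k} ε^i
  have key : ∀ k, s₀ ≤ s k ∧ f (s k) ≤ ε ^ k * f s₀ ∧
      s k ≤ s₀ + f s₀ * ∑ i ∈ Finset.range k, ε ^ i := by
    intro k
    induction k with
    | zero => simp [hs0]
    | succ n ih =>
      obtain ⟨h1, h2, h3⟩ := ih
      have hf : 0 ≤ f (s n) := hnonneg _ h1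
      refine ⟨by rw [hrec]; linarith, ?_, ?_⟩
      · calc f (s (n+1)) = f (s n + f (s n)) := by rw [hrec]
          _ ≤ ε * f (s n) := hfun _ h1
          _ ≤ ε * (ε ^ n * f s₀) := by nlinarith
          _ = ε ^ (n+1) * f s₀ := by ring
      · rw [hrec, Finset.sum_range_succ]
        have : f (s n) ≤ ε ^ n * f s₀ := h2
        nlinarith
  have hmonoS : Monotone s := by
    apply monotone_nat_of_le_succ
    intro n
    rw [hrec]
    linarith [(key n).1, hnonneg _ (key n).1]
  have hbound : ∀ k, s k ≤ s₀ + f s₀ / (1 - ε) := by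
    intro k
    have h3 := (key k).2.2
    have hgeom : ∑ i ∈ Finset.range k, ε ^ i ≤ 1 / (1 - ε) := by
      rw [geom_sum_eq (ne_of_lt hε1) k]
      have heq : (ε ^ k - 1) / (ε - 1) = (1 - ε ^ k) / (1 - ε) := by
        rw [div_eq_div_iff (by linarith) (ne_of_gt hε1')]; ring
      rw [heq, div_le_div_iff₀ hε1' hε1']
      nlinarith [pow_nonneg (le_of_lt hε0) k]
    have hf0 : 0 ≤ f s₀ := hnonneg _ le_rfl
    have : f s₀ * ∑ i ∈ Finset.range k, ε ^ i ≤ f s₀ * (1 / (1 - ε)) :=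
      mul_le_mul_of_nonneg_left hgeom hf0
    calc s k ≤ s₀ + f s₀ * ∑ i ∈ Finset.range k, ε ^ i := h3
      _ ≤ s₀ + f s₀ * (1 / (1 - ε)) := by linarith
      _ = s₀ + f s₀ / (1 - ε) := by ring
  have hbdd : BddAbove (Set.range s) := ⟨s₀ + f s₀ / (1 - ε), by rintro _ ⟨k, rfl⟩; exact hbound k⟩
  refine ⟨⨆ k, s k, tendsto_atTop_ciSup hmonoS hbdd, ?_⟩
  exact ciSup_le hbound
end

section
/- Let C : [s₀, ∞) → ℝ be nonnegative and nonincreasing, and let F > 0, c > 0, β₁ > 0, β₂ > 0, and β = (1+β₁)(1+β₂). Suppose C(s+δ) ≤ c·F·(δ^{−β}·C(s)^{1+β₁} + C(s)^{1+β₂}) for all s ≥ s₀ and all δ > 0. Suppose moreover c·F·C(s₀)^{β₂} < 1. Define δ(s) = (2cF/(1 − cF·C(s₀)^{β₂}))^{1/β}·C(s)^{β₁/β}. Then δ(s + δ(s)) ≤ ε·δ(s) for all s ≥ s₀, where ε = ((1 + cF·C(s₀)^{β₂})/2)^{β₁/β} ∈ (0,1). -/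
/-- From the two-parameter functional inequality for `C`, the function
`δ(s) = (2cF/(1 − cF C(s₀)^{β₂}))^{1/β} C(s)^{β₁/β}` satisfies the Stampacchia
functional relation `δ(s + δ(s)) ≤ ε δ(s)` with
`ε = ((1 + cF C(s₀)^{β₂})/2)^{β₁/β} ∈ (0,1)`. -/
theorem delta_functional_relation (s₀ c F β₁ β₂ : ℝ) (C δ : ℝ → ℝ)
    (hc : 0 < c) (hF : 0 < F) (hβ₁ : 0 < β₁) (hβ₂ : 0 < β₂)
    (hCnonneg : ∀ s, s₀ ≤ s → 0 ≤ C s)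
    (hCmono : AntitoneOn C (Set.Ici s₀))
    (hCineq : ∀ s, s₀ ≤ s → ∀ d : ℝ, 0 < d →
      C (s + d) ≤ c * F * (d ^ (-((1 + β₁) * (1 + β₂))) * (C s) ^ (1 + β₁)
        + (C s) ^ (1 + β₂)))
    (hsmall : c * F * (C s₀) ^ β₂ < 1)
    (hδ : ∀ s, δ s = (2 * c * F / (1 - c * F * (C s₀) ^ β₂)) ^
        ((1:ℝ) / ((1 + β₁) * (1 + β₂))) *
        (C s) ^ (β₁ / ((1 + β₁) * (1 + β₂)))) :
    (0 < ((1 + c * F * (C s₀) ^ β₂) / 2) ^ (β₁ / ((1 + β₁) * (1 + β₂))) ∧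
      ((1 + c * F * (C s₀) ^ β₂) / 2) ^ (β₁ / ((1 + β₁) * (1 + β₂))) < 1) ∧
    ∀ s, s₀ ≤ s → δ (s + δ s) ≤
      ((1 + c * F * (C s₀) ^ β₂) / 2) ^ (β₁ / ((1 + β₁) * (1 + β₂))) * δ s := by
  have hC0 : 0 ≤ C s₀ := hCnonneg s₀ le_rfl
  have hβ : (0:ℝ) < (1 + β₁) * (1 + β₂) := by positivity
  set β : ℝ := (1 + β₁) * (1 + β₂) with hβdef
  set H : ℝ := c * F * (C s₀) ^ β₂ with hHdef
  have hH0 : 0 ≤ H := by positivity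
  have h1H : 0 < 1 - H := by linarith
  set B : ℝ := 2 * c * F / (1 - H) with hBdef
  have hB : 0 < B := by positivity
  have hεb : 0 < (1 + H) / 2 := by linarith
  have hεb1 : (1 + H) / 2 < 1 := by linarith
  have hexp : 0 < β₁ / β := by positivity
  refine ⟨⟨Real.rpow_pos_of_pos hεb _, Real.rpow_lt_one hεb.le hεb1 hexp⟩, ?_⟩
  intro s hs
  rcases eq_or_lt_of_le (hCnonneg s hs) with h0 | hCs
  · have hδs : δ s = 0 := by
      rw [hδ, ← h0, Real.zero_rpow hexp.ne', mul_zero]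
    rw [hδs, add_zero, hδs, mul_zero]
  · -- main case : 0 < C s
    have hdpos : 0 < δ s := by
      rw [hδ]
      exact mul_pos (Real.rpow_pos_of_pos hB _) (Real.rpow_pos_of_pos hCs _)
    have hs' : s₀ ≤ s + δ s := by linarith
    -- compute (δ s) ^ (-β)
    have hdpow : (δ s) ^ (-β) = B⁻¹ * (C s) ^ (-β₁) := by
      rw [hδ, Real.mul_rpow (Real.rpow_nonneg hB.le _) (Real.rpow_nonneg hCs.le _),
        ← Real.rpow_mul hB.le, ← Real.rpow_mul hCs.le]
      congr 1
      · rw [show (1:ℝ)/β * (-β) = -1 by field_simp, Real.rpow_neg_one]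
      · congr 1
        field_simp
    have hA : (C s) ^ (-β₁) * (C s) ^ (1 + β₁) = C s := by
      rw [← Real.rpow_add hCs]
      norm_num
    have hCsle : (C s) ^ β₂ ≤ (C s₀) ^ β₂ :=
      Real.rpow_le_rpow (hCnonneg s hs)
        (hCmono Set.self_mem_Ici (Set.mem_Ici.mpr hs) hs) hβ₂.le
    have hB2 : (C s) ^ (1 + β₂) ≤ (C s₀) ^ β₂ * C s := by
      rw [Real.rpow_add hCs, Real.rpow_one]
      nlinarith
    have hcFB : c * F * B⁻¹ = (1 - H) / 2 := by
      rw [hBdef]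
      field_simp
    have key : C (s + δ s) ≤ (1 + H) / 2 * C s := by
      have h1 := hCineq s hs (δ s) hdpos
      rw [hdpow] at h1
      have h2 : B⁻¹ * (C s) ^ (-β₁) * (C s) ^ (1 + β₁) = B⁻¹ * C s := by
        rw [mul_assoc, hA]
      rw [h2] at h1
      calc C (s + δ s) ≤ c * F * (B⁻¹ * C s + (C s) ^ (1 + β₂)) := h1
        _ ≤ c * F * (B⁻¹ * C s + (C s₀) ^ β₂ * C s) := by gcongr
        _ = (c * F * B⁻¹) * C s + H * C s := by rw [hHdef]; ring
        _ = (1 + H) / 2 * C s := by rw [hcFB]; ring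
    calc δ (s + δ s) = B ^ ((1:ℝ)/β) * (C (s + δ s)) ^ (β₁/β) := hδ _
      _ ≤ B ^ ((1:ℝ)/β) * ((1 + H) / 2 * C s) ^ (β₁/β) := by
          exact mul_le_mul_of_nonneg_left
            (Real.rpow_le_rpow (hCnonneg _ hs') key hexp.le)
            (Real.rpow_nonneg hB.le _)
      _ = ((1 + H) / 2) ^ (β₁/β) * δ s := by
          rw [Real.mul_rpow hεb.le hCs.le, hδ]
          ring
end

section
/- Let C : [s₀, ∞) → ℝ be nonnegative, continuous, and nonincreasing, let F, c > 0, β₁, β₂ > 0, β = (1+β₁)(1+β₂), and suppose C(s+δ) ≤ cF(δ^{−β} C(s)^{1+β₁} + C(s)^{1+β₂}) for all s ≥ s₀ and δ > 0, with cF·C(s₀)^{β₂} < 1. Then there exists s₁ ≥ s₀ with s₁ ≤ s₀ + K·C(s₀)^{β₁/β} for some constant K depending only on c, F, β₁, β₂ and H = cF·C(s₀)^{β₂}, such that C(s) = 0 for all s ≥ s₁. -/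
/-- Combining the functional inequality with the Stampacchia lemma: `C`
vanishes beyond a point `s₁ ≤ s₀ + K C(s₀)^{β₁/β}`, where `K` depends only on
`c, F, β₁, β₂` and `H = cF C(s₀)^{β₂}`. -/
theorem vanishing_from_functional_inequality (s₀ c F β₁ β₂ : ℝ) (C : ℝ → ℝ)
    (hc : 0 < c) (hF : 0 < F) (hβ₁ : 0 < β₁) (hβ₂ : 0 < β₂)
    (hCnonneg : ∀ s, s₀ ≤ s → 0 ≤ C s)
    (hCcont : ContinuousOn C (Set.Ici s₀))
    (hCmono : AntitoneOn C (Set.Ici s₀))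
    (hCineq : ∀ s, s₀ ≤ s → ∀ d : ℝ, 0 < d →
      C (s + d) ≤ c * F * (d ^ (-((1 + β₁) * (1 + β₂))) * (C s) ^ (1 + β₁)
        + (C s) ^ (1 + β₂)))
    (hsmall : c * F * (C s₀) ^ β₂ < 1) :
    ∃ K : ℝ, 0 < K ∧ ∃ s₁ : ℝ, s₀ ≤ s₁ ∧
      s₁ ≤ s₀ + K * (C s₀) ^ (β₁ / ((1 + β₁) * (1 + β₂))) ∧
      ∀ s, s₁ ≤ s → C s = 0 := by
  set β : ℝ := (1 + β₁) * (1 + β₂) with hβdef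
  have hβpos : 0 < β := by positivity
  have hβne : β ≠ 0 := hβpos.ne'
  have hC₀ : 0 ≤ C s₀ := hCnonneg s₀ le_rfl
  set H : ℝ := c * F * (C s₀) ^ β₂ with hHdef
  have hHnn : 0 ≤ H := by positivity
  set ε : ℝ := (1 - H) / 2 with hεdef
  have hεpos : 0 < ε := by simp only [hεdef]; linarith
  set θ : ℝ := (1 + H) / 2 with hθdef
  have hθ0 : 0 < θ := by simp only [hθdef]; linarith
  have hθ1 : θ < 1 := by simp only [hθdef]; linarith
  set A : ℝ := (c * F / ε) ^ (β⁻¹) with hAdef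
  have hcFε : 0 < c * F / ε := by positivity
  have hApos : 0 < A := Real.rpow_pos_of_pos hcFε _
  set r : ℝ := θ ^ (β₁ / β) with hrdef
  have hr0 : 0 < r := Real.rpow_pos_of_pos hθ0 _
  have hr1 : r < 1 := Real.rpow_lt_one hθ0.le hθ1 (by positivity)
  set K : ℝ := A / (1 - r) with hKdef
  have hKpos : 0 < K := div_pos hApos (by linarith)
  set M : ℝ := (C s₀) ^ (β₁ / β) with hMdef
  have hM : 0 ≤ M := Real.rpow_nonneg hC₀ _
  -- one-step decay
  have step : ∀ s, s₀ ≤ s → C (s + A * (C s) ^ (β₁ / β)) ≤ θ * C s := by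
    intro s hs
    have hCs : 0 ≤ C s := hCnonneg s hs
    rcases eq_or_lt_of_le hCs with h0 | hpos
    · have : (C s) ^ (β₁ / β) = 0 := by
        rw [← h0]; exact Real.zero_rpow (by positivity)
      rw [this, mul_zero, add_zero, ← h0, mul_zero]
    · set d : ℝ := A * (C s) ^ (β₁ / β) with hddef
      have hdpos : 0 < d := mul_pos hApos (Real.rpow_pos_of_pos hpos _)
      have key := hCineq s hs d hdpos
      have hdβ : d ^ (-β) = (ε / (c * F)) * (C s) ^ (-β₁) := by
        rw [hddef, Real.mul_rpow hApos.le (Real.rpow_nonneg hCs _),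
          hAdef, ← Real.rpow_mul hcFε.le, ← Real.rpow_mul hCs]
        have h1 : β⁻¹ * -β = -1 := by field_simp
        have h2 : β₁ / β * -β = -β₁ := by field_simp
        rw [h1, h2, Real.rpow_neg_one, inv_div]
      have hsplit1 : (C s) ^ (-β₁) * (C s) ^ (1 + β₁) = C s := by
        rw [← Real.rpow_add hpos]
        norm_num
      have hsplit2 : (C s) ^ (1 + β₂) = (C s) ^ β₂ * C s := by
        rw [← Real.rpow_add_one hpos.ne' β₂]
        ring_nf
      have hCle : C s ≤ C s₀ := hCmono (Set.mem_Ici.mpr le_rfl) (Set.mem_Ici.mpr hs) hs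
      have hpow : (C s) ^ β₂ ≤ (C s₀) ^ β₂ := Real.rpow_le_rpow hCs hCle hβ₂.le
      calc C (s + d) ≤ c * F * (d ^ (-β) * (C s) ^ (1 + β₁) + (C s) ^ (1 + β₂)) := key
        _ = ε * ((C s) ^ (-β₁) * (C s) ^ (1 + β₁)) + c * F * (C s) ^ (1 + β₂) := by
            rw [hdβ]; field_simp
        _ = ε * C s + c * F * ((C s) ^ β₂ * C s) := by rw [hsplit1, hsplit2]
        _ ≤ ε * C s + c * F * ((C s₀) ^ β₂ * C s) := by
            gcongr
        _ = (ε + H) * C s := by rw [hHdef]; ring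
        _ = θ * C s := by rw [hεdef, hθdef, hHdef]; ring
  -- the iteration sequence
  obtain ⟨sq, hsq0, hsqS⟩ : ∃ sq : ℕ → ℝ, sq 0 = s₀ ∧
      ∀ n, sq (n + 1) = sq n + A * (C (sq n)) ^ (β₁ / β) :=
    ⟨fun n => Nat.rec s₀ (fun _ s => s + A * (C s) ^ (β₁ / β)) n, rfl, fun n => rfl⟩
  have main : ∀ n : ℕ, s₀ ≤ sq n ∧ C (sq n) ≤ θ ^ n * C s₀ ∧
      sq n ≤ s₀ + K * M * (1 - r ^ n) := by
    intro n
    induction n with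
    | zero => refine ⟨by rw [hsq0], by simp [hsq0], by simp [hsq0]⟩
    | succ n ih =>
      obtain ⟨h1, h2, h3⟩ := ih
      have hCsq : 0 ≤ C (sq n) := hCnonneg _ h1
      have hs1 : s₀ ≤ sq (n + 1) := by
        rw [hsqS]
        have : 0 ≤ A * (C (sq n)) ^ (β₁ / β) := by positivity
        linarith
      refine ⟨hs1, ?_, ?_⟩
      · rw [hsqS]
        calc C (sq n + A * (C (sq n)) ^ (β₁ / β)) ≤ θ * C (sq n) := step _ h1
          _ ≤ θ * (θ ^ n * C s₀) := by gcongr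
          _ = θ ^ (n + 1) * C s₀ := by ring
      · rw [hsqS]
        have hd : A * (C (sq n)) ^ (β₁ / β) ≤ A * M * r ^ n := by
          have h4 : (C (sq n)) ^ (β₁ / β) ≤ (θ ^ n * C s₀) ^ (β₁ / β) :=
            Real.rpow_le_rpow hCsq h2 (by positivity)
          have h5 : (θ ^ n * C s₀) ^ (β₁ / β) = r ^ n * M := by
            rw [Real.mul_rpow (by positivity) hC₀]
            congr 1
            rw [← Real.rpow_natCast θ n, ← Real.rpow_mul hθ0.le, hrdef,
              ← Real.rpow_natCast (θ ^ (β₁ / β)) n, ← Real.rpow_mul hθ0.le,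
              mul_comm (n : ℝ) (β₁ / β)]
          calc A * (C (sq n)) ^ (β₁ / β) ≤ A * ((θ ^ n * C s₀) ^ (β₁ / β)) := by gcongr
            _ = A * M * r ^ n := by rw [h5]; ring
        have hKr : A * M * r ^ n = K * M * (r ^ n - r ^ (n + 1)) := by
          have hK1 : K * (1 - r) = A := by
            rw [hKdef]
            exact div_mul_cancel₀ A (by linarith)
          have : K * M * (r ^ n - r ^ (n + 1)) = K * (1 - r) * M * r ^ n := by ring
          rw [this, hK1]
        calc sq n + A * (C (sq n)) ^ (β₁ / β)
            ≤ s₀ + K * M * (1 - r ^ n) + K * M * (r ^ n - r ^ (n + 1)) := by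
              rw [← hKr]; linarith
          _ = s₀ + K * M * (1 - r ^ (n + 1)) := by ring
  have hKM : 0 ≤ K * M := mul_nonneg hKpos.le hM
  refine ⟨K, hKpos, s₀ + K * M, by linarith, le_rfl, ?_⟩
  intro s hs
  have hss₀ : s₀ ≤ s := by linarith
  have hle : ∀ n : ℕ, C s ≤ θ ^ n * C s₀ := by
    intro n
    obtain ⟨h1, h2, h3⟩ := main n
    have hsqle : sq n ≤ s := by
      have h0 : 0 ≤ K * M * r ^ n :=
        mul_nonneg (mul_nonneg hKpos.le hM) (pow_pos hr0 n).le
      have : K * M * (1 - r ^ n) ≤ K * M := by nlinarith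
      linarith
    exact le_trans (hCmono (Set.mem_Ici.mpr h1) (Set.mem_Ici.mpr hss₀) hsqle) h2
  have htend : Filter.Tendsto (fun n : ℕ => θ ^ n * C s₀) Filter.atTop (nhds 0) := by
    have := (tendsto_pow_atTop_nhds_zero_of_lt_one hθ0.le hθ1).mul_const (C s₀)
    simpa using this
  have hle0 : C s ≤ 0 := ge_of_tendsto' htend hle
  exact le_antisymm hle0 (hCnonneg s hss₀)
end

section
/- Let A, B : [s₀,∞) → ℝ be nonnegative nonincreasing functions, β₁, β₂ > 0, and suppose for all s ≥ s₀ and δ > 0: A(s+δ) ≤ c₁·R(s,δ)^{1+β₁} and B(s+δ) ≤ c₂·R(s,δ)^{1+β₂}, where R(s,δ) = δ^{-1}(A(s) − A(s+δ)) + B(s) (with c₁, c₂ > 0). Define C(s) = A(s)^{1+β₂} + B(s)^{1+β₁}. Then there is a constant c₃ > 0 depending only on c₁, c₂, β₁, β₂ such that C(s+δ) ≤ c₃·(δ^{−β}·C(s)^{1+β₁} + C(s)^{1+β₂}) for all s ≥ s₀ and δ ∈ (0,1], where β = (1+β₁)(1+β₂). -/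
lemma my_add_rpow_le (x y q : ℝ) (hx : 0 ≤ x) (hy : 0 ≤ y) (hq : 0 ≤ q) :
    (x + y) ^ q ≤ 2 ^ q * (x ^ q + y ^ q) := by
  have h2 : (0:ℝ) ≤ 2 ^ q := Real.rpow_nonneg (by norm_num) q
  rcases le_total x y with h | h
  · calc (x + y) ^ q ≤ (2 * y) ^ q :=
          Real.rpow_le_rpow (by linarith) (by linarith) hq
      _ = 2 ^ q * y ^ q := Real.mul_rpow (by norm_num) hy
      _ ≤ 2 ^ q * (x ^ q + y ^ q) := by
          have := Real.rpow_nonneg hx q; nlinarith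
  · calc (x + y) ^ q ≤ (2 * x) ^ q :=
          Real.rpow_le_rpow (by linarith) (by linarith) hq
      _ = 2 ^ q * x ^ q := Real.mul_rpow (by norm_num) hx
      _ ≤ 2 ^ q * (x ^ q + y ^ q) := by
          have := Real.rpow_nonneg hy q; nlinarith

/-- From the pair of interpolation estimates for `A` and `B`, the combined
function `C = A^{1+β₂} + B^{1+β₁}` satisfies the two-parameter functional
inequality with exponent `β = (1+β₁)(1+β₂)`. -/
theorem combined_functional_inequality (s₀ c₁ c₂ β₁ β₂ : ℝ) (A B : ℝ → ℝ)
    (hc₁ : 0 < c₁) (hc₂ : 0 < c₂) (hβ₁ : 0 < β₁) (hβ₂ : 0 < β₂)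
    (hAnonneg : ∀ s, s₀ ≤ s → 0 ≤ A s)
    (hBnonneg : ∀ s, s₀ ≤ s → 0 ≤ B s)
    (hAmono : AntitoneOn A (Set.Ici s₀))
    (hBmono : AntitoneOn B (Set.Ici s₀))
    (hA : ∀ s, s₀ ≤ s → ∀ d : ℝ, 0 < d →
      A (s + d) ≤ c₁ * (d⁻¹ * (A s - A (s + d)) + B s) ^ (1 + β₁))
    (hB : ∀ s, s₀ ≤ s → ∀ d : ℝ, 0 < d →
      B (s + d) ≤ c₂ * (d⁻¹ * (A s - A (s + d)) + B s) ^ (1 + β₂)) :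
    ∃ c₃ : ℝ, 0 < c₃ ∧ ∀ s, s₀ ≤ s → ∀ d : ℝ, 0 < d → d ≤ 1 →
      (A (s + d)) ^ (1 + β₂) + (B (s + d)) ^ (1 + β₁) ≤
        c₃ * (d ^ (-((1 + β₁) * (1 + β₂))) *
            ((A s) ^ (1 + β₂) + (B s) ^ (1 + β₁)) ^ (1 + β₁) +
          ((A s) ^ (1 + β₂) + (B s) ^ (1 + β₁)) ^ (1 + β₂)) := by
  set β : ℝ := (1 + β₁) * (1 + β₂) with hβdef
  have hβpos : 0 < β := by positivity
  have h1β₁ : (0:ℝ) ≤ 1 + β₁ := by linarith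
  have h1β₂ : (0:ℝ) ≤ 1 + β₂ := by linarith
  have hKpos : 0 < c₁ ^ (1 + β₂) + c₂ ^ (1 + β₁) := by positivity
  refine ⟨2 ^ β * (c₁ ^ (1 + β₂) + c₂ ^ (1 + β₁)), by positivity, ?_⟩
  intro s hs d hd hd1
  have hsd : s₀ ≤ s + d := by linarith
  set R : ℝ := d⁻¹ * (A s - A (s + d)) + B s with hRdef
  have hAdec : A (s + d) ≤ A s :=
    hAmono (Set.mem_Ici.mpr hs) (Set.mem_Ici.mpr hsd) (by linarith)
  have hRnn : 0 ≤ R := by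
    have h1 : 0 ≤ d⁻¹ := by positivity
    have h2 : 0 ≤ B s := hBnonneg s hs
    have h3 : 0 ≤ d⁻¹ * (A s - A (s + d)) := mul_nonneg h1 (by linarith)
    rw [hRdef]; linarith
  -- key pointwise bounds
  have key1 : (A (s + d)) ^ (1 + β₂) ≤ c₁ ^ (1 + β₂) * R ^ β := by
    calc (A (s + d)) ^ (1 + β₂) ≤ (c₁ * R ^ (1 + β₁)) ^ (1 + β₂) :=
          Real.rpow_le_rpow (hAnonneg _ hsd) (hA s hs d hd) h1β₂
      _ = c₁ ^ (1 + β₂) * (R ^ (1 + β₁)) ^ (1 + β₂) :=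
          Real.mul_rpow hc₁.le (Real.rpow_nonneg hRnn _)
      _ = c₁ ^ (1 + β₂) * R ^ β := by
          rw [← Real.rpow_mul hRnn]
  have key2 : (B (s + d)) ^ (1 + β₁) ≤ c₂ ^ (1 + β₁) * R ^ β := by
    calc (B (s + d)) ^ (1 + β₁) ≤ (c₂ * R ^ (1 + β₂)) ^ (1 + β₁) :=
          Real.rpow_le_rpow (hBnonneg _ hsd) (hB s hs d hd) h1β₁
      _ = c₂ ^ (1 + β₁) * (R ^ (1 + β₂)) ^ (1 + β₁) :=
          Real.mul_rpow hc₂.le (Real.rpow_nonneg hRnn _)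
      _ = c₂ ^ (1 + β₁) * R ^ β := by
          rw [← Real.rpow_mul hRnn, mul_comm (1 + β₂)]
  -- bound R^β
  have hRle : R ≤ d⁻¹ * A s + B s := by
    have : d⁻¹ * (A s - A (s + d)) ≤ d⁻¹ * A s := by
      apply mul_le_mul_of_nonneg_left _ (by positivity)
      have := hAnonneg _ hsd; linarith
    rw [hRdef]; linarith
  have hdinv : 0 ≤ d⁻¹ := by positivity
  have hAs : 0 ≤ A s := hAnonneg s hs
  have hBs : 0 ≤ B s := hBnonneg s hs
  set C : ℝ := (A s) ^ (1 + β₂) + (B s) ^ (1 + β₁) with hCdef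
  have hCnn : 0 ≤ C := by positivity
  have hAβ : (A s) ^ β ≤ C ^ (1 + β₁) := by
    have : (A s) ^ β = ((A s) ^ (1 + β₂)) ^ (1 + β₁) := by
      rw [← Real.rpow_mul hAs, mul_comm (1 + β₂)]
    rw [this]
    apply Real.rpow_le_rpow (by positivity) _ h1β₁
    have : 0 ≤ (B s) ^ (1 + β₁) := by positivity
    simp only [hCdef]; linarith
  have hBβ : (B s) ^ β ≤ C ^ (1 + β₂) := by
    have : (B s) ^ β = ((B s) ^ (1 + β₁)) ^ (1 + β₂) := by
      rw [← Real.rpow_mul hBs]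
    rw [this]
    apply Real.rpow_le_rpow (by positivity) _ h1β₂
    have : 0 ≤ (A s) ^ (1 + β₂) := by positivity
    simp only [hCdef]; linarith
  have hdinvA : (d⁻¹ * A s) ^ β = d ^ (-β) * (A s) ^ β := by
    rw [Real.mul_rpow hdinv hAs, ← Real.rpow_neg_one d, ← Real.rpow_mul hd.le,
      neg_one_mul]
  have hRβ : R ^ β ≤ 2 ^ β * (d ^ (-β) * C ^ (1 + β₁) + C ^ (1 + β₂)) := by
    have hdnegβ : 0 ≤ d ^ (-β) := Real.rpow_nonneg hd.le _
    calc R ^ β ≤ (d⁻¹ * A s + B s) ^ β := Real.rpow_le_rpow hRnn hRle hβpos.le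
      _ ≤ 2 ^ β * ((d⁻¹ * A s) ^ β + (B s) ^ β) :=
          my_add_rpow_le _ _ _ (by positivity) hBs hβpos.le
      _ = 2 ^ β * (d ^ (-β) * (A s) ^ β + (B s) ^ β) := by rw [hdinvA]
      _ ≤ 2 ^ β * (d ^ (-β) * C ^ (1 + β₁) + C ^ (1 + β₂)) := by
          have h2 : (0:ℝ) ≤ 2 ^ β := Real.rpow_nonneg (by norm_num) _
          have := mul_le_mul_of_nonneg_left hAβ hdnegβ
          nlinarith
  have hRβnn : 0 ≤ R ^ β := Real.rpow_nonneg hRnn _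
  calc (A (s + d)) ^ (1 + β₂) + (B (s + d)) ^ (1 + β₁)
      ≤ (c₁ ^ (1 + β₂) + c₂ ^ (1 + β₁)) * R ^ β := by nlinarith
    _ ≤ (c₁ ^ (1 + β₂) + c₂ ^ (1 + β₁)) *
        (2 ^ β * (d ^ (-β) * C ^ (1 + β₁) + C ^ (1 + β₂))) :=
        mul_le_mul_of_nonneg_left hRβ hKpos.le
    _ = 2 ^ β * (c₁ ^ (1 + β₂) + c₂ ^ (1 + β₁)) *
        (d ^ (-β) * C ^ (1 + β₁) + C ^ (1 + β₂)) := by ring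
end
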